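/- arXiv:1111.0577 — 4 statements merged into one kernel-verified Lean document; each statement's English description precedes it below -/
import Mathlib

section
/- In a free group F, the set of tuples defined by a finite conjunction of word equations is also definable by a single word equation: for any finite system of equations w₁(X)=1, …, wₖ(X)=1 over a nonabelian free group F (with coefficients from F allowed), there exists a single word w(X) such that for every tuple of values in F, w(X)=1 holds if and only if all wᵢ(X)=1 hold. -/
/-!
Two equations `P = 1`, `Q = 1` are traded for the single equation `andWord a b P Q = 1`, i.e.
`⁅P, a⁆ * (⁅P, b⁆ * Q ^ 2) ^ 2 = 1`, where `a ≠ b` are free generators; absorbing the equations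
of the system one at a time gives the theorem.

Everything rests on one fact about a generator `a`: if `⁅x, a⁆` is a square then it is trivial.
Then `⁅P, a⁆ * Q ^ 2 = 1` forces `⁅P, a⁆ = 1` and `Q ^ 2 = 1`, so `Q = 1` (free groups are
torsion-free) and `P ∈ ⟨a⟩` (the centralizer of `a` is `⟨a⟩`); finally `⟨a⟩ ∩ ⟨b⟩ = 1` by
counting exponents. To prove the fact, strip powers of `a` from both ends of `x`, leaving `y`
whose reduced word neither starts nor ends with `a^±1`. The reduced word of `⁅y, a⁆` is then
literally `y a y⁻¹ a⁻¹`, which is cyclically reduced; but a cyclically reduced square has reduced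
word of the form `M M`, and the two halves `y a`, `y⁻¹ a⁻¹` end in different letters.
-/

open Subgroup
open scoped commutatorElement

theorem commutatorElement_mul_mul_of_commute {G : Type*} [Group G] {a u v : G} (hu : Commute u a)
    (hv : Commute v a) (y : G) : ⁅u * y * v, a⁆ = u * ⁅y, a⁆ * u⁻¹ := by
  calc ⁅u * y * v, a⁆ = u * y * (v * a * v⁻¹) * y⁻¹ * u⁻¹ * a⁻¹ := by group
    _ = u * y * a * y⁻¹ * (u⁻¹ * a⁻¹) := by rw [hv.mul_inv_cancel]; group
    _ = u * ⁅y, a⁆ * u⁻¹ := by rw [hu.inv_inv.eq, commutatorElement_def]; group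

theorem commute_of_mem_zpowers {G : Type*} [Group G] {a u : G} (hu : u ∈ zpowers a) :
    Commute u a := by
  obtain ⟨k, rfl⟩ := mem_zpowers_iff.1 hu
  exact (Commute.refl a).zpow_left k

def andWord {G : Type*} [Group G] (A B P Q : G) : G :=
  ⁅P, A⁆ * (⁅P, B⁆ * Q ^ 2) ^ 2

theorem map_andWord {G H : Type*} [Group G] [Group H] (φ : G →* H) (A B P Q : G) :
    φ (andWord A B P Q) = andWord (φ A) (φ B) (φ P) (φ Q) := by
  simp [andWord, map_commutatorElement]

namespace FreeGroup

variable {α : Type*}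

def EndsAvoid (c : α) (L : List (α × Bool)) : Prop :=
  (∀ p ∈ L.head?, p.1 ≠ c) ∧ ∀ p ∈ L.getLast?, p.1 ≠ c

theorem mk_singleton_mem_zpowers (p : α × Bool) : mk [p] ∈ zpowers (of p.1) := by
  obtain ⟨a, _ | _⟩ := p
  · have : mk [(a, false)] = (of a)⁻¹ := by simp [of, inv_mk, invRev]
    exact this ▸ inv_mem (mem_zpowers _)
  · exact mem_zpowers _

theorem isReduced_append_of_fst_ne {L₁ L₂ : List (α × Bool)} (h₁ : IsReduced L₁)
    (h₂ : IsReduced L₂) (h : ∀ a ∈ L₁.getLast?, ∀ b ∈ L₂.head?, a.1 ≠ b.1) :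
    IsReduced (L₁ ++ L₂) :=
  h₁.append h₂ fun a ha b hb hab => absurd hab (h a ha b hb)

section DecidableEq

variable [DecidableEq α]

theorem toWord_mk_of_isReduced {L : List (α × Bool)} (h : IsReduced L) : (mk L).toWord = L := by
  rw [toWord_mk, h.reduce_eq]

theorem eq_mk_singleton_mul_of_toWord_eq_cons {x : FreeGroup α} {p : α × Bool}
    {L : List (α × Bool)} (h : x.toWord = p :: L) : x = mk [p] * mk L ∧ (mk L).toWord = L := by
  refine ⟨by rw [mul_mk, List.singleton_append, ← h, mk_toWord], toWord_mk_of_isReduced ?_⟩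
  exact isReduced_toWord.infix ⟨[p], [], by rw [h]; simp⟩

theorem eq_mul_mk_singleton_of_toWord_eq_concat {x : FreeGroup α} {p : α × Bool}
    {L : List (α × Bool)} (h : x.toWord = L ++ [p]) : x = mk L * mk [p] ∧ (mk L).toWord = L := by
  refine ⟨by rw [mul_mk, ← h, mk_toWord], toWord_mk_of_isReduced ?_⟩
  exact isReduced_toWord.infix ⟨[], [p], by rw [h]; simp⟩

theorem exists_mem_zpowers_mul_mul_mem_zpowers (c : α) (x : FreeGroup α) :
    ∃ u ∈ zpowers (of c), ∃ v ∈ zpowers (of c), ∃ y,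
      x = u * y * v ∧ EndsAvoid c y.toWord := by
  induction hn : x.toWord.length using Nat.strong_induction_on generalizing x with
  | _ n ih =>
  by_cases hhead : ∃ p ∈ x.toWord.head?, p.1 = c
  · obtain ⟨p, hp, rfl⟩ := hhead
    obtain ⟨L, hL⟩ : ∃ L, x.toWord = p :: L := List.head?_eq_some_iff.1 hp
    obtain ⟨hx, hLw⟩ := eq_mk_singleton_mul_of_toWord_eq_cons hL
    obtain ⟨u, hu, v, hv, y, hLy, hy⟩ := ih L.length (by rw [← hn, hL]; simp) (mk L) (by rw [hLw])
    refine ⟨mk [p] * u, mul_mem (mk_singleton_mem_zpowers p) hu, v, hv, y, ?_, hy⟩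
    rw [hx, hLy]
    group
  by_cases hlast : ∃ p ∈ x.toWord.getLast?, p.1 = c
  · obtain ⟨p, hp, rfl⟩ := hlast
    obtain ⟨L, hL⟩ : ∃ L, x.toWord = L ++ [p] := List.getLast?_eq_some_iff.1 hp
    obtain ⟨hx, hLw⟩ := eq_mul_mk_singleton_of_toWord_eq_concat hL
    obtain ⟨u, hu, v, hv, y, hLy, hy⟩ := ih L.length (by rw [← hn, hL]; simp) (mk L) (by rw [hLw])
    refine ⟨u, hu, v * mk [p], mul_mem hv (mk_singleton_mem_zpowers p), y, ?_, hy⟩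
    rw [hx, hLy]
    group
  push Not at hhead hlast
  exact ⟨1, one_mem _, 1, one_mem _, x, by group, hhead, hlast⟩

theorem isCyclicallyReduced_commutatorElement_word {c : α} {y : FreeGroup α} (hy : y ≠ 1)
    (h : EndsAvoid c y.toWord) :
    IsCyclicallyReduced ((y.toWord ++ [(c, true)]) ++ (invRev y.toWord ++ [(c, false)])) := by
  have hne : y.toWord ≠ [] := by simpa using hy
  obtain ⟨p, hp⟩ : ∃ p, y.toWord.head? = some p := ⟨_, List.head?_eq_some_head hne⟩
  obtain ⟨q, hq⟩ : ∃ q, y.toWord.getLast? = some q := ⟨_, List.getLast?_eq_some_getLast hne⟩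
  have hpc := h.1 p hp
  have hqc := h.2 q hq
  have hinv : IsReduced (invRev y.toWord) := toWord_inv y ▸ isReduced_toWord
  refine ⟨isReduced_append_of_fst_ne (isReduced_append_of_fst_ne isReduced_toWord .singleton ?_)
    (isReduced_append_of_fst_ne hinv .singleton ?_) ?_, ?_⟩
  · simp [hq, hqc]
  · simp [invRev, hp, hpc]
  · simp [invRev, hq, Ne.symm hqc]
  · intro a ha b hb hab
    rw [← List.append_assoc, List.getLast?_concat, Option.mem_some_iff] at ha
    simp only [List.head?_append, hp, Option.some_or, Option.mem_some_iff] at hb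
    subst ha hb
    exact absurd hab.symm hpc

theorem toWord_commutatorElement_of {c : α} {y : FreeGroup α} (hy : y ≠ 1)
    (h : EndsAvoid c y.toWord) :
    ⁅y, of c⁆.toWord = (y.toWord ++ [(c, true)]) ++ (invRev y.toWord ++ [(c, false)]) := by
  rw [← toWord_mk_of_isReduced (isCyclicallyReduced_commutatorElement_word hy h).isReduced,
    commutatorElement_def]
  conv_lhs => rw [← mk_toWord (x := y)]
  simp [of, inv_mk, mul_mk, invRev]

theorem exists_toWord_sq_eq_append_self {x : FreeGroup α}
    (h : IsCyclicallyReduced (x ^ 2).toWord) : ∃ M, (x ^ 2).toWord = M ++ M := by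
  rw [toWord_pow, reduceCyclically.reduce_flatten_replicate isReduced_toWord] at h ⊢
  simp only [OfNat.ofNat_ne_zero, if_false, List.replicate_succ, List.replicate_zero,
    List.flatten_cons, List.flatten_nil, List.append_nil] at h ⊢
  generalize reduceCyclically.conjugator x.toWord = C at h ⊢
  generalize reduceCyclically x.toWord = M at h ⊢
  cases C with
  | nil => exact ⟨M, by simp⟩
  | cons p C =>
    have hlast : (p.1, !p.2) ∈ (p :: C ++ (M ++ M) ++ invRev (p :: C)).getLast? := by
      rw [invRev_cons, ← List.append_assoc, show invRev [p] = [(p.1, !p.2)] from rfl,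
        List.getLast?_concat]
      rfl
    exact absurd (h.2 _ hlast p rfl rfl) (Bool.not_ne_self p.2)

theorem commutatorElement_of_eq_one_of_eq_sq {c : α} {x g : FreeGroup α}
    (hx : ⁅x, of c⁆ = g ^ 2) : ⁅x, of c⁆ = 1 := by
  obtain ⟨u, hu, v, hv, y, rfl, hy⟩ := exists_mem_zpowers_mul_mul_mem_zpowers c x
  rw [commutatorElement_mul_mul_of_commute (commute_of_mem_zpowers hu)
    (commute_of_mem_zpowers hv)] at hx ⊢
  rcases eq_or_ne y 1 with rfl | hy1
  · simp
  have hsq : ⁅y, of c⁆ = (u⁻¹ * g * u) ^ 2 :=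
    calc ⁅y, of c⁆ = u⁻¹ * (u * ⁅y, of c⁆ * u⁻¹) * u := by group
      _ = (u⁻¹ * g * u) ^ 2 := by rw [hx, sq, sq]; group
  have hcr := isCyclicallyReduced_commutatorElement_word hy1 hy
  rw [← toWord_commutatorElement_of hy1 hy, hsq] at hcr
  obtain ⟨M, hM⟩ := exists_toWord_sq_eq_append_self hcr
  rw [← hsq, toWord_commutatorElement_of hy1 hy] at hM
  have hlen : (y.toWord ++ [(c, true)]).length = M.length := by
    have := congrArg List.length hM
    simp only [List.length_append, invRev_length, List.length_singleton] at this ⊢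
    omega
  obtain ⟨hM₁, hM₂⟩ := List.append_inj hM hlen
  have := congrArg List.getLast? (hM₁.trans hM₂.symm)
  simp at this

theorem mem_zpowers_of_commute_of {c : α} {x : FreeGroup α} (h : Commute x (of c)) :
    x ∈ zpowers (of c) := by
  obtain ⟨u, hu, v, hv, y, rfl, hy⟩ := exists_mem_zpowers_mul_mul_mem_zpowers c x
  rw [← commutatorElement_eq_one_iff_commute, commutatorElement_mul_mul_of_commute
    (commute_of_mem_zpowers hu) (commute_of_mem_zpowers hv), conj_eq_one_iff] at h
  rcases eq_or_ne y 1 with rfl | hy1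
  · simpa using mul_mem hu hv
  have := congrArg toWord h
  simp [toWord_commutatorElement_of hy1 hy] at this

theorem eq_one_of_mem_zpowers_of_mem_zpowers {a b : α} (hab : a ≠ b) {x : FreeGroup α}
    (ha : x ∈ zpowers (of a)) (hb : x ∈ zpowers (of b)) : x = 1 := by
  obtain ⟨m, rfl⟩ := mem_zpowers_iff.1 ha
  obtain ⟨n, hn⟩ := mem_zpowers_iff.1 hb
  let χ : FreeGroup α →* Multiplicative ℤ := lift (Pi.mulSingle a (Multiplicative.ofAdd 1))
  have := congrArg χ hn
  simp [χ, hab.symm, ← ofAdd_zsmul] at this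
  rw [← (Multiplicative.ofAdd.injective (a₁ := 0) this), zpow_zero]

theorem commutatorElement_of_mul_sq_eq_one_iff {c : α} {P Q : FreeGroup α} :
    ⁅P, of c⁆ * Q ^ 2 = 1 ↔ P ∈ zpowers (of c) ∧ Q = 1 := by
  constructor
  · intro h
    have hP : ⁅P, of c⁆ = 1 := commutatorElement_of_eq_one_of_eq_sq (g := Q⁻¹) <| by
      rw [inv_pow]
      exact eq_inv_of_mul_eq_one_left h
    rw [hP, one_mul, pow_eq_one_iff_left two_ne_zero] at h
    exact ⟨mem_zpowers_of_commute_of (commutatorElement_eq_one_iff_commute.1 hP), h⟩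
  · rintro ⟨hP, rfl⟩
    rw [one_pow, mul_one, commutatorElement_eq_one_iff_commute]
    exact commute_of_mem_zpowers hP

theorem andWord_of_of_eq_one_iff {a b : α} (hab : a ≠ b) {P Q : FreeGroup α} :
    andWord (of a) (of b) P Q = 1 ↔ P = 1 ∧ Q = 1 := by
  rw [andWord, commutatorElement_of_mul_sq_eq_one_iff, commutatorElement_of_mul_sq_eq_one_iff]
  constructor
  · rintro ⟨hPa, hPb, rfl⟩
    exact ⟨eq_one_of_mem_zpowers_of_mem_zpowers hab hPa hPb, rfl⟩
  · rintro ⟨rfl, rfl⟩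
    exact ⟨one_mem _, one_mem _, rfl⟩

end DecidableEq

end FreeGroup

/-- Over a nonabelian free group `F = FreeGroup X`, any finite system of equations
(words in variables `Fin d` with coefficients from `F`, encoded as elements of the free
group on `X ⊕ Fin d`) is equivalent to a single equation. -/
theorem finite_system_equivalent_to_one_equation {X : Type*} (hX : ∃ x y : X, x ≠ y)
    (k d : ℕ) (w : Fin k → FreeGroup (X ⊕ Fin d)) :
    ∃ W : FreeGroup (X ⊕ Fin d),
      ∀ v : Fin d → FreeGroup X,
        FreeGroup.lift (Sum.elim FreeGroup.of v) W = 1 ↔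
          ∀ i, FreeGroup.lift (Sum.elim FreeGroup.of v) (w i) = 1 := by
  classical
  obtain ⟨a, b, hab⟩ := hX
  induction k with
  | zero => exact ⟨1, fun v => by simp⟩
  | succ k ih =>
    obtain ⟨W, hW⟩ := ih (fun i => w i.succ)
    refine ⟨andWord (.of (.inl a)) (.of (.inl b)) (w 0) W, fun v => ?_⟩
    rw [map_andWord, FreeGroup.lift_apply_of, FreeGroup.lift_apply_of, Sum.elim_inl,
      Sum.elim_inl, FreeGroup.andWord_of_of_eq_one_iff hab, hW, Fin.forall_fin_succ]
end

section
/- In a free group, if x and y are elements such that [x,a]=1 and [y,a]=1 for some a ≠ 1, then [x,y]=1 (transitivity of commutation: centralizers of nontrivial elements are abelian, in fact cyclic). -/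
/-!
The centralizer of `a` is a subgroup of a free group, hence free by Nielsen–Schreier, and `a` is
a nontrivial central element of it. A free group of rank at least two has trivial center: if `z`
commutes with a one-letter word `l` that cancels at neither end of the reduced word `w` of `z`,
then `l :: w = w ++ [l]`, so `w` is a power of `l`; choosing `l` suitably, this contradicts the
first or last letter of `w`. Hence the centralizer has rank at most one and is abelian.
-/

theorem inv_mul_inv_mul_mul_eq_one_iff_commute {G : Type*} [Group G] {u v : G} :
    u⁻¹ * v⁻¹ * u * v = 1 ↔ Commute u v := by
  simpa [commutatorElement_def] using
    (commutatorElement_eq_one_iff_commute (g₁ := u⁻¹) (g₂ := v⁻¹))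

namespace FreeGroup

variable {α : Type*}

theorem commute_of_subsingleton [Subsingleton α] (u v : FreeGroup α) : Commute u v := by
  induction u with
  | C1 => exact Commute.one_left v
  | of a =>
    induction v with
    | C1 => exact Commute.one_right _
    | of b => rw [Subsingleton.elim a b]
    | inv_of b h => exact h.inv_right
    | mul b c h₁ h₂ => exact h₁.mul_right h₂
  | inv_of a h => exact h.inv_left
  | mul a b h₁ h₂ => exact h₁.mul_left h₂

theorem forall_mem_toWord_eq_of_commute [DecidableEq α] {z : FreeGroup α} {l : α × Bool}
    (hhead : ∀ b ∈ z.toWord.head?, l.1 = b.1 → l.2 = b.2)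
    (hlast : ∀ b ∈ z.toWord.getLast?, b.1 = l.1 → b.2 = l.2)
    (h : Commute (mk [l]) z) : ∀ b ∈ z.toWord, b = l := by
  have hred : IsReduced z.toWord := isReduced_toWord
  have hleft : (mk [l] * z).toWord = l :: z.toWord := by
    rw [toWord_mul, toWord_mk, reduce_singleton, List.singleton_append]
    exact IsReduced.reduce_eq (List.isChain_cons.2 ⟨hhead, hred⟩)
  have hright : (z * mk [l]).toWord = z.toWord ++ [l] := by
    rw [toWord_mul, toWord_mk, reduce_singleton]
    exact IsReduced.reduce_eq
      (List.isChain_append.2 ⟨hred, List.isChain_singleton l, by simpa using hlast⟩)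
  -- a word fixed by rotation is constant
  have hrot : (l :: z.toWord).rotate 1 = l :: z.toWord := by
    rw [List.rotate_cons_succ, List.rotate_zero, ← hleft, h.eq, hright]
  have : Nonempty (α × Bool) := ⟨l⟩
  obtain ⟨c, hc⟩ := List.rotate_one_eq_self_iff_eq_replicate.1 hrot
  have hc' := (List.eq_replicate_iff.1 hc).2
  intro b hb
  rw [hc' b (List.mem_cons_of_mem l hb), hc' l List.mem_cons_self]

theorem eq_one_of_mem_center [Nontrivial α] {z : FreeGroup α}
    (hz : z ∈ Subgroup.center (FreeGroup α)) : z = 1 := by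
  classical
  by_contra hz1
  have hw : z.toWord ≠ [] := mt toWord_eq_nil_iff.1 hz1
  obtain ⟨p, hp⟩ := Option.ne_none_iff_exists'.1 (mt List.head?_eq_none_iff.1 hw)
  obtain ⟨q, hq⟩ := Option.ne_none_iff_exists'.1 (mt List.getLast?_eq_none_iff.1 hw)
  have hcomm (l : α × Bool) : Commute (mk [l]) z := Subgroup.mem_center_iff.1 hz _
  -- a letter cancelling at neither end: another generator if `p` and `q` share theirs, else `p`
  by_cases hpq : p.1 = q.1
  · obtain ⟨g, hg⟩ := exists_ne p.1
    have h := forall_mem_toWord_eq_of_commute (l := (g, true))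
      (by simp [hp, hg]) (by simp [hq, ← hpq, hg.symm]) (hcomm _)
    exact hg (congrArg Prod.fst (h p (List.mem_of_mem_head? hp))).symm
  · have h := forall_mem_toWord_eq_of_commute (l := p)
      (by simp [hp]) (by simp [hq, Ne.symm hpq]) (hcomm _)
    exact hpq (congrArg Prod.fst (h q (List.mem_of_mem_getLast? hq))).symm

end FreeGroup

namespace IsFreeGroup

variable {G : Type*} [Group G] [IsFreeGroup G]

theorem commute_of_mem_center {a : G} (ha : a ∈ Subgroup.center G) (ha1 : a ≠ 1) (x y : G) :
    Commute x y := by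
  let e := toFreeGroup G
  rcases subsingleton_or_nontrivial (Generators G) with _ | _
  · simpa using (FreeGroup.commute_of_subsingleton (e x) (e y)).map e.symm.toMonoidHom
  · refine absurd (e.injective ?_) ha1
    rw [map_one]
    refine FreeGroup.eq_one_of_mem_center (Subgroup.mem_center_iff.2 fun g => ?_)
    simpa using congrArg e (Subgroup.mem_center_iff.1 ha (e.symm g))

theorem commute_trans {a x y : G} (ha : a ≠ 1) (hxa : Commute x a) (hay : Commute a y) :
    Commute x y := by
  let H := Subgroup.centralizer {a}
  have haH : a ∈ H := Subgroup.mem_centralizer_singleton_iff.2 rfl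
  have hxH : x ∈ H := Subgroup.mem_centralizer_singleton_iff.2 hxa.eq
  have hyH : y ∈ H := Subgroup.mem_centralizer_singleton_iff.2 hay.eq.symm
  have hcenter : (⟨a, haH⟩ : H) ∈ Subgroup.center H :=
    Subgroup.mem_center_iff.2 fun g => Subtype.ext (Subgroup.mem_centralizer_singleton_iff.1 g.2)
  -- `H` is free by Nielsen–Schreier (`subgroupIsFreeOfIsFree`)
  exact (commute_of_mem_center hcenter (by simpa using ha) ⟨x, hxH⟩ ⟨y, hyH⟩).map H.subtype

end IsFreeGroup

/-- Transitivity of commutation in a free group: if `[x,a] = 1` and `[y,a] = 1`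
for some `a ≠ 1`, then `[x,y] = 1`. -/
theorem freeGroup_commutation_transitive {X : Type*} (a x y : FreeGroup X) (ha : a ≠ 1)
    (hx : x⁻¹ * a⁻¹ * x * a = 1) (hy : y⁻¹ * a⁻¹ * y * a = 1) :
    x⁻¹ * y⁻¹ * x * y = 1 :=
  inv_mul_inv_mul_mul_eq_one_iff_commute.2 <| IsFreeGroup.commute_trans ha
    (inv_mul_inv_mul_mul_eq_one_iff_commute.1 hx)
    (inv_mul_inv_mul_mul_eq_one_iff_commute.1 hy).symm
end

section
/- Let F be a free group of rank r ≥ 2 with 2r = k symmetrized generators, and fix 0 < ε ≤ 1. The number of reduced words of length n over the k letters that contain two distinct occurrences (possibly overlapping, possibly of the inverse) of some common subword of length m = ⌈εn⌉ is at most C·n²·(k−1)^{n−m} for a constant C depending only on k. -/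
/-- `v` occurs in `w` starting at position `i`. -/
def occursAt {X : Type*} (v w : List (X × Bool)) (i : ℕ) : Prop :=
  (w.drop i).take v.length = v

/-- The formal inverse of a word. -/
def wordInv {X : Type*} (v : List (X × Bool)) : List (X × Bool) :=
  (v.map (fun p => (p.1, !p.2))).reverse

/-- `v` is a piece of `w`: a nontrivial subword occurring in at least two different
ways (possibly as the inverse, possibly overlapping). -/
def IsPiece {X : Type*} (v w : List (X × Bool)) : Prop :=
  v ≠ [] ∧ ((∃ i j, i ≠ j ∧ occursAt v w i ∧ occursAt v w j) ∨
    (∃ i j, occursAt v w i ∧ occursAt (wordInv v) w j))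

/-- Reduced word length of an element of the free group. -/
def glen {X : Type*} [DecidableEq X] (g : FreeGroup X) : ℕ := g.toWord.length

/-- A subset of a free group is negligible if for some `ε > 0` all but finitely many of
its elements `p` have a piece of length at least `ε·|p|`. -/
def Negligible {X : Type*} [DecidableEq X] (P : Set (FreeGroup X)) : Prop :=
  ∃ ε : ℝ, 0 < ε ∧
    {p ∈ P | ¬ ∃ v, IsPiece v p.toWord ∧ ε * glen p ≤ (v.length : ℝ)}.Finite

/-!
A word with a piece of length `m` contains a block `w[j, j + m)` repeating, literally or
inverted, a block starting at some `i`, with `i < j` in the literal case; in the inverted case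
reducedness forces the two blocks to be disjoint, since an overlap would be centred on a letter
equal to its own inverse or on a cancelling pair of adjacent letters. In either case every letter
of the block `w[j, j + m)` is determined by an earlier one, so for fixed `(i, j)` the word is
determined by its letters outside that block. These form two reduced words of total length
`n - m`, of which there are at most `4 (k - 1) ^ (n - m)` pairs; summing over the `2 n²` types
of repetition gives `C = 8`.
-/

open Finset

namespace List

variable {α : Type*}

theorem eq_of_block_determined {w w' : List α} {j m : ℕ} (src : ℕ → ℕ) (φ : α → α)
    (hsrc : ∀ t < m, src t < j + t)
    (hw : ∀ t < m, w[j + t]? = w[src t]?.map φ) (hw' : ∀ t < m, w'[j + t]? = w'[src t]?.map φ)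
    (htake : w.take j = w'.take j) (hdrop : w.drop (j + m) = w'.drop (j + m)) : w = w' := by
  refine ext_getElem? fun p => ?_
  induction p using Nat.strong_induction_on with
  | _ p ih =>
    by_cases hpj : p < j
    · rw [← getElem?_take_of_lt hpj, htake, getElem?_take_of_lt hpj]
    by_cases hpm : j + m ≤ p
    · simpa [Nat.add_sub_cancel' hpm] using congrArg (·[p - (j + m)]?) hdrop
    obtain ⟨t, ht, rfl⟩ : ∃ t < m, j + t = p := ⟨p - j, by omega, by omega⟩
    rw [hw t ht, hw' t ht, ih _ (hsrc t ht)]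

end List

theorem occursAt.add_length_le {X : Type*} {v w : List (X × Bool)} {i : ℕ} (h : occursAt v w i)
    (hv : v ≠ []) : i + v.length ≤ w.length := by
  have hlen := congrArg List.length h
  have hm := List.length_pos_iff.mpr hv
  simp only [List.length_take, List.length_drop] at hlen
  omega

theorem occursAt.getElem? {X : Type*} {v w : List (X × Bool)} {i t : ℕ} (h : occursAt v w i)
    (ht : t < v.length) : w[i + t]? = v[t]? := by
  rw [← h, List.getElem?_take_of_lt ht, List.getElem?_drop]

namespace FreeGroup

variable {X : Type*}

def letterInv (a : X × Bool) : X × Bool := (a.1, !a.2)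

theorem getElem?_invRev {v : List (X × Bool)} {t : ℕ} (ht : t < v.length) :
    (invRev v)[t]? = v[v.length - 1 - t]?.map letterInv := by
  rw [invRev, List.getElem?_reverse (by simpa using ht), List.length_map, List.getElem?_map]
  rfl

theorem IsReduced.add_le_of_inverted_block {w : List (X × Bool)} (hw : IsReduced w)
    {m i j : ℕ} (hij : i ≤ j) (hjm : j + m ≤ w.length)
    (h : ∀ t < m, w[j + t]? = w[i + (m - 1 - t)]?.map letterInv) : i + m ≤ j := by
  by_contra! hov
  set p := (i + j + m - 1) / 2
  have hp := h (p - j) (by omega)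
  rw [show j + (p - j) = p by omega] at hp
  rcases Nat.even_or_odd (i + j + m - 1) with ⟨c, hc⟩ | ⟨c, hc⟩
  · rw [show i + (m - 1 - (p - j)) = p by omega, List.getElem?_eq_getElem (by omega)] at hp
    simp [letterInv, Prod.ext_iff] at hp
  · rw [show i + (m - 1 - (p - j)) = p + 1 by omega, List.getElem?_eq_getElem (by omega),
      List.getElem?_eq_getElem (by omega)] at hp
    have hadj := List.isChain_iff_getElem.mp hw p (by omega)
    simp only [Option.map_some, Option.some.injEq] at hp
    simp [hp, letterInv] at hadj

variable [DecidableEq X]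

instance : DecidablePred (@IsReduced X) :=
  fun _ => inferInstanceAs (Decidable (List.IsChain _ _))

variable (X) [Fintype X]

def reducedWords (n : ℕ) : Finset (List (X × Bool)) :=
  {w ∈ univ.image (List.Vector.toList : List.Vector (X × Bool) n → _) | IsReduced w}

variable {X}

@[simp]
theorem mem_reducedWords {n : ℕ} {w : List (X × Bool)} :
    w ∈ reducedWords X n ↔ IsReduced w ∧ w.length = n := by
  simp only [reducedWords, mem_filter, mem_image, mem_univ, true_and]
  exact ⟨fun ⟨⟨v, hv⟩, hred⟩ => ⟨hred, hv ▸ v.toList_length⟩,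
    fun ⟨hred, hw⟩ => ⟨⟨⟨w, hw⟩, rfl⟩, hred⟩⟩

theorem card_reducedWords_le_pow (n : ℕ) :
    #(reducedWords X n) ≤ (2 * Fintype.card X) ^ n :=
  calc #(reducedWords X n) ≤ #(univ : Finset (List.Vector (X × Bool) n)) :=
        (card_filter_le _ _).trans card_image_le
    _ = (2 * Fintype.card X) ^ n := by simp [mul_comm]

theorem card_reducedWords_succ_succ_le (n : ℕ) :
    #(reducedWords X (n + 2)) ≤ (2 * Fintype.card X - 1) * #(reducedWords X (n + 1)) := by
  refine card_le_mul_card_image_of_maps_to (f := List.tail) (fun w hw => ?_) _ fun t ht => ?_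
  · obtain ⟨hred, hlen⟩ := mem_reducedWords.mp hw
    exact mem_reducedWords.mpr ⟨hred.infix (List.tail_suffix w).isInfix, by simp [hlen]⟩
  obtain ⟨a, t, rfl⟩ : ∃ a t', t = a :: t' :=
    List.exists_cons_of_length_eq_add_one (mem_reducedWords.mp ht).2
  have hfiber : {w ∈ reducedWords X (n + 2) | w.tail = a :: t} ⊆
      (univ.erase (letterInv a)).image (· :: a :: t) := by
    intro w hw
    obtain ⟨⟨hred, -⟩, htail⟩ := by simpa only [mem_filter, mem_reducedWords] using hw
    obtain ⟨b, rfl⟩ : ∃ b, w = b :: a :: t :=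
      ⟨w.head (by rintro rfl; simp at htail), by simp [← htail]⟩
    refine mem_image.mpr ⟨b, mem_erase.mpr ⟨fun hb => ?_, mem_univ b⟩, rfl⟩
    simp [hb, letterInv, IsReduced] at hred
  calc #{w ∈ reducedWords X (n + 2) | w.tail = a :: t}
      ≤ #(univ.erase (letterInv a)) := (card_le_card hfiber).trans card_image_le
    _ = 2 * Fintype.card X - 1 := by simp [mul_comm]

theorem card_reducedWords_le : ∀ n, #(reducedWords X n) ≤ 2 * (2 * Fintype.card X - 1) ^ n
  | 0 => (card_reducedWords_le_pow 0).trans (by simp)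
  | 1 => (card_reducedWords_le_pow 1).trans (by simp only [pow_one]; omega)
  | n + 2 =>
    calc #(reducedWords X (n + 2))
        ≤ (2 * Fintype.card X - 1) * #(reducedWords X (n + 1)) :=
          card_reducedWords_succ_succ_le n
      _ ≤ (2 * Fintype.card X - 1) * (2 * (2 * Fintype.card X - 1) ^ (n + 1)) :=
          Nat.mul_le_mul_left _ (card_reducedWords_le (n + 1))
      _ = 2 * (2 * Fintype.card X - 1) ^ (n + 2) := by ring

end FreeGroup

open FreeGroup

section RepeatedBlocks

variable {X : Type*}

/-- The block of length `m` at `j` repeats the block at `i`, literally (`false`) or inverted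
(`true`). -/
def HasRepeatedBlock (m i j : ℕ) : Bool → List (X × Bool) → Prop
  | false, w => i < j ∧ ∀ t < m, w[j + t]? = w[i + t]?
  | true, w => i + m ≤ j ∧ ∀ t < m, w[j + t]? = w[i + (m - 1 - t)]?.map letterInv

theorem HasRepeatedBlock.eq {m i j : ℕ} {b : Bool} {w w' : List (X × Bool)}
    (hw : HasRepeatedBlock m i j b w) (hw' : HasRepeatedBlock m i j b w')
    (htake : w.take j = w'.take j) (hdrop : w.drop (j + m) = w'.drop (j + m)) : w = w' := by
  cases b with
  | false =>
    refine List.eq_of_block_determined (i + ·) id (fun t _ => by have := hw.1; omega)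
      ?_ ?_ htake hdrop
    · simpa using hw.2
    · simpa using hw'.2
  | true =>
    exact List.eq_of_block_determined (fun t => i + (m - 1 - t)) letterInv
      (fun t _ => by have := hw.1; omega) hw.2 hw'.2 htake hdrop

theorem IsPiece.exists_hasRepeatedBlock {v w : List (X × Bool)} (hw : IsReduced w)
    (hv : IsPiece v w) : ∃ b i j, i < w.length ∧ j < w.length ∧ j + v.length ≤ w.length ∧
      HasRepeatedBlock v.length i j b w := by
  obtain ⟨hne, ⟨i, j, hij, hi, hj⟩ | ⟨i, j, hi, hj⟩⟩ := hv
  · wlog hlt : i < j generalizing i j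
    · exact this j i hij.symm hj hi (by omega)
    have hjm := hj.add_length_le hne
    have hm := List.length_pos_iff.mpr hne
    refine ⟨false, i, j, by omega, by omega, hjm, hlt, fun t ht => ?_⟩
    rw [hj.getElem? ht, hi.getElem? ht]
  · change occursAt (invRev v) w j at hj
    wlog hle : i ≤ j generalizing v i j
    · have hne' : invRev v ≠ [] := by simpa [← List.length_pos_iff] using hne
      simpa using this (v := invRev v) hne' j i hj (by rwa [invRev_invRev]) (by omega)
    have hjm := hj.add_length_le (by simpa [← List.length_pos_iff] using hne)
    rw [invRev_length] at hjm
    have hm := List.length_pos_iff.mpr hne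
    have hinv : ∀ t < v.length,
        w[j + t]? = w[i + (v.length - 1 - t)]?.map letterInv := fun t ht => by
      rw [hj.getElem? (by simpa), getElem?_invRev ht, hi.getElem? (by omega)]
    exact ⟨true, i, j, by omega, by omega, hjm, hw.add_le_of_inverted_block hle hjm hinv, hinv⟩

instance [DecidableEq X] (m i j : ℕ) (b : Bool) :
    DecidablePred (HasRepeatedBlock (X := X) m i j b) :=
  fun _ => by cases b <;> unfold HasRepeatedBlock <;> infer_instance

variable (X) [DecidableEq X] [Fintype X]

def repeatCell (n m : ℕ) (b : Bool) (i j : ℕ) : Finset (List (X × Bool)) :=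
  {w ∈ reducedWords X n | j + m ≤ n ∧ HasRepeatedBlock m i j b w}

variable {X}

theorem card_repeatCell_le (n m : ℕ) (b : Bool) (i j : ℕ) :
    #(repeatCell X n m b i j) ≤ 4 * (2 * Fintype.card X - 1) ^ (n - m) := by
  by_cases hjm : j + m ≤ n
  swap
  · simp [repeatCell, hjm]
  have hmaps : Set.MapsTo (fun w : List (X × Bool) => (w.take j, w.drop (j + m)))
      (repeatCell X n m b i j) ↑(reducedWords X j ×ˢ reducedWords X (n - (j + m))) := by
    intro w hw
    obtain ⟨hw, -, -⟩ := mem_filter.mp hw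
    obtain ⟨hred, rfl⟩ := mem_reducedWords.mp hw
    refine mem_coe.mpr (mem_product.mpr
      ⟨mem_reducedWords.mpr ⟨?_, ?_⟩, mem_reducedWords.mpr ⟨?_, ?_⟩⟩)
    · exact hred.infix (List.take_prefix _ _).isInfix
    · simp only [List.length_take]; omega
    · exact hred.infix (List.drop_suffix _ _).isInfix
    · exact List.length_drop
  have hinj : Set.InjOn (fun w : List (X × Bool) => (w.take j, w.drop (j + m)))
      (repeatCell X n m b i j) := by
    intro w hw w' hw' h
    exact (mem_filter.mp hw).2.2.eq (mem_filter.mp hw').2.2 (congrArg Prod.fst h)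
      (congrArg Prod.snd h)
  calc #(repeatCell X n m b i j)
      ≤ #(reducedWords X j) * #(reducedWords X (n - (j + m))) :=
        (card_le_card_of_injOn _ hmaps hinj).trans (card_product _ _).le
    _ ≤ 2 * (2 * Fintype.card X - 1) ^ j * (2 * (2 * Fintype.card X - 1) ^ (n - (j + m))) :=
        Nat.mul_le_mul (card_reducedWords_le j) (card_reducedWords_le _)
    _ = 4 * (2 * Fintype.card X - 1) ^ (n - m) := by
        rw [mul_mul_mul_comm, ← pow_add, show j + (n - (j + m)) = n - m by omega]
        norm_num

end RepeatedBlocks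

theorem count_reduced_words_with_piece_general {X : Type*} [DecidableEq X] [Fintype X]
    (ε : ℝ) :
    ∃ C : ℕ, ∀ n : ℕ,
      {w : List (X × Bool) | FreeGroup.reduce w = w ∧ w.length = n ∧
          ∃ v, v.length = ⌈ε * n⌉₊ ∧ IsPiece v w}.ncard ≤
        C * n ^ 2 * (2 * Fintype.card X - 1) ^ (n - ⌈ε * n⌉₊) := by
  refine ⟨8, fun n => ?_⟩
  set m := ⌈ε * n⌉₊
  set types := (univ : Finset Bool) ×ˢ range n ×ˢ range n
  have hcover : {w : List (X × Bool) | FreeGroup.reduce w = w ∧ w.length = n ∧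
      ∃ v, v.length = m ∧ IsPiece v w} ⊆
        ↑(types.biUnion fun c => repeatCell X n m c.1 c.2.1 c.2.2) := by
    rintro w ⟨hred, rfl, v, hvm, hv⟩
    have hred := isReduced_iff_reduce_eq.mpr hred
    obtain ⟨b, i, j, hi, hj, hjm, hrep⟩ := hv.exists_hasRepeatedBlock hred
    simp only [coe_biUnion, Set.mem_iUnion, mem_coe]
    exact ⟨(b, i, j), by simp [types, hi, hj],
      mem_filter.mpr ⟨mem_reducedWords.mpr ⟨hred, rfl⟩, hvm ▸ hjm, hvm ▸ hrep⟩⟩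
  calc _ ≤ #(types.biUnion fun c => repeatCell X n m c.1 c.2.1 c.2.2) :=
        (Set.ncard_le_ncard hcover (finite_toSet _)).trans (Set.ncard_coe_finset _).le
    _ ≤ ∑ c ∈ types, #(repeatCell X n m c.1 c.2.1 c.2.2) := card_biUnion_le
    _ ≤ ∑ _c ∈ types, 4 * (2 * Fintype.card X - 1) ^ (n - m) :=
        sum_le_sum fun c _ => card_repeatCell_le n m c.1 c.2.1 c.2.2
    _ = 8 * n ^ 2 * (2 * Fintype.card X - 1) ^ (n - m) := by
        rw [sum_const, smul_eq_mul, card_product, card_product, card_univ, Fintype.card_bool,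
          card_range]
        ring

/-- In a free group of rank r ≥ 2 (k = 2r symmetrized generators), the number of reduced
words of length n containing a piece (two distinct, possibly inverted/overlapping,
occurrences of a common subword) of length m = ⌈εn⌉ is at most C·n²·(k−1)^{n−m}, for a
constant C depending only on k. -/
theorem count_reduced_words_with_piece {X : Type*} [DecidableEq X] [Fintype X]
    (hr : 2 ≤ Fintype.card X) (ε : ℝ) (hε0 : 0 < ε) (hε1 : ε ≤ 1) :
    ∃ C : ℕ, ∀ n : ℕ,
      {w : List (X × Bool) | FreeGroup.reduce w = w ∧ w.length = n ∧
          ∃ v, v.length = ⌈ε * n⌉₊ ∧ IsPiece v w}.ncard ≤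
        C * n ^ 2 * (2 * Fintype.card X - 1) ^ (n - ⌈ε * n⌉₊) :=
  count_reduced_words_with_piece_general ε
end

section
/- Let G be a torsion-free group with cyclic centralizers and unique roots, and let a, b ∈ G with [a,b] ≠ 1. Suppose n is such that uⁿvⁿwⁿ = 1 in G implies u, v, w pairwise commute. Then for any x, y ∈ G satisfying (xⁿa)ⁿa⁻ⁿ = ((yb)ⁿb⁻ⁿ)ⁿ, we must have x = 1 and y = 1; consequently, for any system of equations S₁=1,…,Sₗ=1 over G there is a single equation over G with the same solution set. -/
/-- Let G be a torsion-free group with cyclic centralizers and unique roots, a, b ∈ G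
non-commuting, and n such that uⁿvⁿwⁿ = 1 forces u, v, w to pairwise commute. Then
(xⁿa)ⁿa⁻ⁿ = ((yb)ⁿb⁻ⁿ)ⁿ only for x = y = 1, and consequently every finite system of
equations over G (with coefficients, encoded as words over G ⊕ variables) is equivalent
to a single equation. -/
theorem hyperbolic_system_to_single_equation {G : Type*} [Group G]
    (hcyc : ∀ g : G, g ≠ 1 → ∃ z : G, Subgroup.centralizer {g} = Subgroup.zpowers z)
    (hroots : ∀ k : ℕ, 0 < k → ∀ x y : G, x ^ k = y ^ k → x = y)
    (a b : G) (hab : a⁻¹ * b⁻¹ * a * b ≠ 1) (n : ℕ)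
    (hV : ∀ u v w : G, u ^ n * v ^ n * w ^ n = 1 →
      u * v = v * u ∧ u * w = w * u ∧ v * w = w * v) :
    (∀ x y : G, (x ^ n * a) ^ n * (a ^ n)⁻¹ = ((y * b) ^ n * (b ^ n)⁻¹) ^ n →
      x = 1 ∧ y = 1) ∧
    (∀ (l d : ℕ) (S : Fin l → FreeGroup (G ⊕ Fin d)),
      ∃ W : FreeGroup (G ⊕ Fin d), ∀ v : Fin d → G,
        FreeGroup.lift (Sum.elim id v) W = 1 ↔
          ∀ i, FreeGroup.lift (Sum.elim id v) (S i) = 1) := by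
  have comm_of_eq : ∀ u v : G, u * v = v * u → Commute u v := fun u v h => h
  have hab' : ¬ Commute a b := by
    intro h
    apply hab
    rw [mul_assoc, mul_assoc, h.eq]
    group
  have hn : 0 < n := by
    rcases Nat.eq_zero_or_pos n with h | h
    · exfalso
      obtain ⟨h1, -, -⟩ := hV a b 1 (by simp [h])
      exact hab' h1
    · exact h
  have torsionfree : ∀ g : G, g ^ n = 1 → g = 1 := fun g h =>
    hroots n hn g 1 (by simpa using h)
  have key : ∀ x y : G, (x ^ n * a) ^ n * (a ^ n)⁻¹ = ((y * b) ^ n * (b ^ n)⁻¹) ^ n →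
      x = 1 ∧ y = 1 := by
    intro x y heq
    set q : G := (y * b) ^ n * (b ^ n)⁻¹ with hq
    have t1 : (x ^ n * a) ^ n * a⁻¹ ^ n * q⁻¹ ^ n = 1 := by
      rw [inv_pow, inv_pow, ← heq]
      group
    obtain ⟨c1, c2, c3⟩ := hV _ _ _ t1
    have C1 : Commute (x ^ n * a) a := by
      have := (comm_of_eq _ _ c1).inv_right
      simpa using this
    have C2 : Commute (x ^ n * a) q := by
      have := (comm_of_eq _ _ c2).inv_right
      simpa using this
    have C3 : Commute a q := by
      have := ((comm_of_eq _ _ c3).inv_left).inv_right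
      simpa using this
    have hxna : Commute (x ^ n) a := by
      have h := C1.mul_left ((Commute.refl a).inv_left)
      simpa [mul_assoc] using h
    have hxnq : Commute (x ^ n) q := by
      have h := C2.mul_left (C3.inv_left)
      simpa [mul_assoc] using h
    -- q ^ n = (x ^ n) ^ n
    have hqx : q = x ^ n := by
      apply hroots n hn
      rw [← heq, hxna.mul_pow, mul_assoc, mul_inv_cancel, mul_one]
    -- second triple
    have t2 : (y * b) ^ n * b⁻¹ ^ n * x⁻¹ ^ n = 1 := by
      rw [inv_pow, inv_pow, ← hq, hqx, mul_inv_cancel]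
    obtain ⟨d1, d2, d3⟩ := hV _ _ _ t2
    have D1 : Commute (y * b) b := by
      have := (comm_of_eq _ _ d1).inv_right
      simpa using this
    have D3 : Commute b x := by
      have := ((comm_of_eq _ _ d3).inv_left).inv_right
      simpa using this
    have hyb : Commute y b := by
      have h := D1.mul_left ((Commute.refl b).inv_left)
      simpa [mul_assoc] using h
    by_cases hx : x = 1
    · subst hx
      refine ⟨rfl, ?_⟩
      have h1 : (y * b) ^ n = b ^ n := by
        have : q = 1 := by rw [hqx, one_pow]
        rw [hq] at this
        exact (mul_inv_eq_one.mp this)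
      have := hroots n hn _ _ h1
      exact mul_right_cancel (by rw [this, one_mul])
    · exfalso
      have hxn : x ^ n ≠ 1 := fun h => hx (torsionfree x h)
      obtain ⟨z, hz⟩ := hcyc (x ^ n) hxn
      have hmem : ∀ g : G, Commute (x ^ n) g → g ∈ Subgroup.zpowers z := by
        intro g hg
        rw [← hz]
        rw [Subgroup.mem_centralizer_iff]
        intro m hm
        rw [Set.mem_singleton_iff] at hm
        subst hm
        exact hg.eq
      obtain ⟨i, hi⟩ := hmem a hxna
      obtain ⟨j, hj⟩ := hmem x ((Commute.refl x).pow_left n)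
      have hxa : Commute x a := by
        rw [← hi, ← hj]
        exact Commute.zpow_zpow (Commute.refl z) j i
      obtain ⟨w, hw⟩ := hcyc x hx
      have hmem' : ∀ g : G, Commute x g → g ∈ Subgroup.zpowers w := by
        intro g hg
        rw [← hw, Subgroup.mem_centralizer_iff]
        intro m hm
        rw [Set.mem_singleton_iff] at hm
        subst hm
        exact hg.eq
      obtain ⟨i', hi'⟩ := hmem' a hxa
      obtain ⟨j', hj'⟩ := hmem' b D3.symm
      apply hab'
      rw [← hi', ← hj']
      exact Commute.zpow_zpow (Commute.refl w) i' j'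
  refine ⟨key, ?_⟩
  intro l d S
  classical
  let A : FreeGroup (G ⊕ Fin d) := FreeGroup.of (Sum.inl a)
  let B : FreeGroup (G ⊕ Fin d) := FreeGroup.of (Sum.inl b)
  let comb : FreeGroup (G ⊕ Fin d) → FreeGroup (G ⊕ Fin d) → FreeGroup (G ⊕ Fin d) :=
    fun P Q => ((P ^ n * A) ^ n * (A ^ n)⁻¹) * (((Q * B) ^ n * (B ^ n)⁻¹) ^ n)⁻¹
  have combSpec : ∀ (v : Fin d → G) (P Q : FreeGroup (G ⊕ Fin d)),
      FreeGroup.lift (Sum.elim id v) (comb P Q) = 1 ↔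
        (FreeGroup.lift (Sum.elim id v) P = 1 ∧ FreeGroup.lift (Sum.elim id v) Q = 1) := by
    intro v P Q
    set φ := FreeGroup.lift (Sum.elim id v) with hφ
    have hA : φ A = a := by simp [A, hφ]
    have hB : φ B = b := by simp [B, hφ]
    have expand : φ (comb P Q) =
        ((φ P ^ n * a) ^ n * (a ^ n)⁻¹) * (((φ Q * b) ^ n * (b ^ n)⁻¹) ^ n)⁻¹ := by
      simp [comb, map_mul, map_pow, map_inv, hA, hB]
    rw [expand]
    constructor
    · intro h
      have h' : (φ P ^ n * a) ^ n * (a ^ n)⁻¹ = ((φ Q * b) ^ n * (b ^ n)⁻¹) ^ n :=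
        mul_inv_eq_one.mp h
      exact key _ _ h'
    · rintro ⟨h1, h2⟩
      rw [h1, h2]
      simp
  induction l with
  | zero => exact ⟨1, fun v => ⟨fun _ i => i.elim0, fun _ => by simp⟩⟩
  | succ l ih =>
    obtain ⟨W', hW'⟩ := ih (fun i => S i.succ)
    refine ⟨comb (S 0) W', fun v => ?_⟩
    rw [combSpec v (S 0) W', hW' v, Fin.forall_fin_succ]
end
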